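/- Let l ≥ 0 be an integer and let Ψ : ℂ → ℂ be a C^∞ function such that Ψ(z) = 1/z̄ for |z| ≥ 2 and |Ψ(z)| ≤ 1 for all z ∈ ℂ. Then there exists a constant C > 0 (depending only on l and Ψ) such that for all z, w ∈ ℂ with z ≠ w one has |1/(z̄ − w̄) − Ψ(z) Σ_{k=0}^{l} w̄^k Ψ(z)^k| ≤ C ⟨w⟩^{l+1} / (|z − w| ⟨z⟩^{l+1}). -/

import Mathlib

open MeasureTheory Complex Filter
open scoped ENNReal

noncomputable section

/-- The Japanese bracket `⟨z⟩ = (1 + |z|²)^(1/2)`. -/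
def jb (z : ℂ) : ℝ := Real.sqrt (1 + ‖z‖ ^ 2)

lemma one_le_jb (z : ℂ) : 1 ≤ jb z := by
  have h : Real.sqrt 1 ≤ jb z := Real.sqrt_le_sqrt (by nlinarith [sq_nonneg ‖z‖])
  simpa using h

lemma jb_pos (z : ℂ) : 0 < jb z := lt_of_lt_of_le one_pos (one_le_jb z)

lemma norm_le_jb (z : ℂ) : ‖z‖ ≤ jb z :=
  calc ‖z‖ = Real.sqrt (‖z‖ ^ 2) := (Real.sqrt_sq (norm_nonneg z)).symm
  _ ≤ jb z := Real.sqrt_le_sqrt (by nlinarith)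

lemma jb_le_two_mul (z : ℂ) (h : 2 ≤ ‖z‖) : jb z ≤ 2 * ‖z‖ :=
  calc jb z ≤ Real.sqrt ((2 * ‖z‖) ^ 2) := Real.sqrt_le_sqrt (by nlinarith)
  _ = 2 * ‖z‖ := Real.sqrt_sq (by positivity)

lemma jb_le_three (z : ℂ) (h : ‖z‖ ≤ 2) : jb z ≤ 3 :=
  calc jb z ≤ Real.sqrt ((3:ℝ) ^ 2) := Real.sqrt_le_sqrt (by nlinarith [norm_nonneg z])
  _ = 3 := Real.sqrt_sq (by norm_num)

/-- **Kernel estimate (Lemma 3.1).**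
Let `l ≥ 0` be an integer and `Ψ : ℂ → ℂ` a `C^∞` function with `Ψ z = 1/z̄` for `|z| ≥ 2`
and `|Ψ z| ≤ 1` everywhere. Then there is `C > 0` such that for all `z ≠ w`,
`|1/(z̄ - w̄) - Ψ z ∑_{k=0}^{l} w̄^k Ψ(z)^k| ≤ C ⟨w⟩^{l+1} / (|z - w| ⟨z⟩^{l+1})`. -/
theorem kernel_estimate (l : ℕ) (Ψ : ℂ → ℂ) (hΨ : ContDiff ℝ (⊤ : ℕ∞) Ψ)
    (hΨ1 : ∀ z : ℂ, 2 ≤ ‖z‖ → Ψ z = 1 / (starRingEnd ℂ) z)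
    (hΨ2 : ∀ z : ℂ, ‖Ψ z‖ ≤ 1) :
    ∃ C > 0, ∀ z w : ℂ, z ≠ w →
      ‖1 / ((starRingEnd ℂ) z - (starRingEnd ℂ) w) -
          Ψ z * ∑ k ∈ Finset.range (l + 1), ((starRingEnd ℂ) w) ^ k * (Ψ z) ^ k‖ ≤
        C * jb w ^ (l + 1) / (‖z - w‖ * jb z ^ (l + 1)) := by
  refine ⟨(3 * l + 4) * 3 ^ (l + 1), by positivity, ?_⟩
  intro z w hzw
  have hd : (0:ℝ) < ‖z - w‖ := by
    rw [norm_pos_iff]; exact sub_ne_zero.mpr hzw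
  have hdconj : ‖(starRingEnd ℂ) z - (starRingEnd ℂ) w‖ = ‖z - w‖ := by
    rw [← map_sub]; exact RCLike.norm_conj _
  have hjw := jb_pos w
  have hjz := jb_pos z
  have hjwl1 : (1:ℝ) ≤ jb w ^ (l + 1) := one_le_pow₀ (one_le_jb w)
  by_cases hz : 2 ≤ ‖z‖
  · -- outer region: geometric series identity
    have hz0 : z ≠ 0 := by
      intro h; rw [h] at hz; simp at hz; linarith
    have ha : (starRingEnd ℂ) z ≠ 0 := by simpa using hz0
    have hab : (starRingEnd ℂ) z - (starRingEnd ℂ) w ≠ 0 := by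
      rw [sub_ne_zero]
      exact fun h => hzw ((starRingEnd ℂ).injective h)
    set a := (starRingEnd ℂ) z with hadef
    set b := (starRingEnd ℂ) w with hbdef
    have key : 1 / (a - b) - Ψ z * ∑ k ∈ Finset.range (l + 1), b ^ k * (Ψ z) ^ k
        = (b / a) ^ (l + 1) / (a - b) := by
      rw [hΨ1 z hz]
      have hsum : ∑ k ∈ Finset.range (l + 1), b ^ k * (1 / a) ^ k
          = ∑ k ∈ Finset.range (l + 1), (b / a) ^ k := by
        refine Finset.sum_congr rfl fun k _ => ?_
        rw [← mul_pow, mul_one_div]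
      rw [hsum]
      have hgeom : (1 / a) * ∑ k ∈ Finset.range (l + 1), (b / a) ^ k
          = (1 - (b / a) ^ (l + 1)) / (a - b) := by
        rw [eq_div_iff hab]
        have h1 := geom_sum_mul (b / a) (l + 1)
        calc (1 / a) * (∑ k ∈ Finset.range (l + 1), (b / a) ^ k) * (a - b)
            = -((∑ k ∈ Finset.range (l + 1), (b / a) ^ k) * (b / a - 1)) := by
              field_simp
              ring
          _ = 1 - (b / a) ^ (l + 1) := by rw [h1]; ring
      rw [hgeom]
      ring
    rw [key, norm_div, norm_pow, norm_div, hdconj]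
    have hbw : ‖b‖ = ‖w‖ := RCLike.norm_conj _
    have haz : ‖a‖ = ‖z‖ := RCLike.norm_conj _
    rw [hbw, haz]
    have hz0' : (0:ℝ) < ‖z‖ := by linarith
    rw [div_pow, div_div, div_le_div_iff₀ (by positivity) (by positivity)]
    have h1 : ‖w‖ ^ (l + 1) ≤ jb w ^ (l + 1) :=
      pow_le_pow_left₀ (norm_nonneg w) (norm_le_jb w) _
    have h2 : jb z ^ (l + 1) ≤ 2 ^ (l + 1) * ‖z‖ ^ (l + 1) := by
      rw [← mul_pow]
      exact pow_le_pow_left₀ hjz.le (jb_le_two_mul z hz) _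
    have h3 : (2:ℝ) ^ (l + 1) ≤ (3 * (l:ℝ) + 4) * 3 ^ (l + 1) := by
      calc (2:ℝ) ^ (l + 1) ≤ 3 ^ (l + 1) := pow_le_pow_left₀ (by norm_num) (by norm_num) _
      _ ≤ (3 * (l:ℝ) + 4) * 3 ^ (l + 1) :=
          le_mul_of_one_le_left (by positivity)
            (by have := Nat.cast_nonneg (α := ℝ) l; linarith)
    have key2 : ‖w‖ ^ (l + 1) * jb z ^ (l + 1)
        ≤ (3 * (l:ℝ) + 4) * 3 ^ (l + 1) * jb w ^ (l + 1) * ‖z‖ ^ (l + 1) := by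
      calc ‖w‖ ^ (l + 1) * jb z ^ (l + 1)
          ≤ jb w ^ (l + 1) * (2 ^ (l + 1) * ‖z‖ ^ (l + 1)) :=
            mul_le_mul h1 h2 (by positivity) (by positivity)
        _ ≤ (3 * (l:ℝ) + 4) * 3 ^ (l + 1) * jb w ^ (l + 1) * ‖z‖ ^ (l + 1) := by
            have := mul_le_mul_of_nonneg_right h3
              (show (0:ℝ) ≤ jb w ^ (l + 1) * ‖z‖ ^ (l + 1) by positivity)
            nlinarith [this]
    nlinarith [mul_le_mul_of_nonneg_right key2 hd.le]
  · -- inner region: trivial bound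
    push_neg at hz
    have hjz3 : jb z ≤ 3 := jb_le_three z hz.le
    have hS : ‖Ψ z * ∑ k ∈ Finset.range (l + 1), ((starRingEnd ℂ) w) ^ k * (Ψ z) ^ k‖
        ≤ ((l:ℝ) + 1) * jb w ^ l := by
      rw [norm_mul]
      calc ‖Ψ z‖ * ‖∑ k ∈ Finset.range (l + 1), ((starRingEnd ℂ) w) ^ k * (Ψ z) ^ k‖
          ≤ 1 * ∑ _k ∈ Finset.range (l + 1), jb w ^ l := by
            apply mul_le_mul (hΨ2 z) ?_ (norm_nonneg _) (by norm_num)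
            refine (norm_sum_le _ _).trans (Finset.sum_le_sum fun k hk => ?_)
            rw [norm_mul, norm_pow, norm_pow]
            have hk' : k ≤ l := Nat.lt_succ_iff.mp (Finset.mem_range.mp hk)
            calc ‖(starRingEnd ℂ) w‖ ^ k * ‖Ψ z‖ ^ k
                ≤ ‖w‖ ^ k * 1 := by
                  rw [RCLike.norm_conj]
                  exact mul_le_mul_of_nonneg_left
                    (pow_le_one₀ (norm_nonneg _) (hΨ2 z)) (by positivity)
              _ = ‖w‖ ^ k := mul_one _
              _ ≤ jb w ^ k := pow_le_pow_left₀ (norm_nonneg w) (norm_le_jb w) _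
              _ ≤ jb w ^ l := pow_le_pow_right₀ (one_le_jb w) hk'
        _ = ((l:ℝ) + 1) * jb w ^ l := by
            rw [Finset.sum_const, Finset.card_range]; push_cast; ring
    have hinv : ‖1 / ((starRingEnd ℂ) z - (starRingEnd ℂ) w)‖ = 1 / ‖z - w‖ := by
      rw [norm_div, hdconj, norm_one]
    have hdw : ‖z - w‖ ≤ 3 * jb w := by
      calc ‖z - w‖ ≤ ‖z‖ + ‖w‖ := norm_sub_le z w
        _ ≤ 2 + jb w := add_le_add hz.le (norm_le_jb w)
        _ ≤ 3 * jb w := by nlinarith [one_le_jb w]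
    calc ‖1 / ((starRingEnd ℂ) z - (starRingEnd ℂ) w) -
          Ψ z * ∑ k ∈ Finset.range (l + 1), ((starRingEnd ℂ) w) ^ k * (Ψ z) ^ k‖
        ≤ 1 / ‖z - w‖ + ((l:ℝ) + 1) * jb w ^ l := by
          refine (norm_sub_le _ _).trans ?_
          rw [hinv]
          exact add_le_add le_rfl hS
      _ ≤ jb w ^ (l + 1) / ‖z - w‖ + 3 * ((l:ℝ) + 1) * jb w ^ (l + 1) / ‖z - w‖ := by
          refine add_le_add ?_ ?_
          · gcongr
          · rw [le_div_iff₀ hd]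
            calc ((l:ℝ) + 1) * jb w ^ l * ‖z - w‖
                ≤ ((l:ℝ) + 1) * jb w ^ l * (3 * jb w) :=
                  mul_le_mul_of_nonneg_left hdw (by positivity)
              _ = 3 * ((l:ℝ) + 1) * jb w ^ (l + 1) := by rw [pow_succ]; ring
      _ = (3 * (l:ℝ) + 4) * jb w ^ (l + 1) / ‖z - w‖ := by
          rw [← add_div]; ring_nf
      _ ≤ (3 * (l:ℝ) + 4) * 3 ^ (l + 1) * jb w ^ (l + 1) / (‖z - w‖ * jb z ^ (l + 1)) := by
          rw [div_le_div_iff₀ hd (by positivity)]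
          have hjzp : jb z ^ (l + 1) ≤ 3 ^ (l + 1) := pow_le_pow_left₀ hjz.le hjz3 _
          have hbig : (3 * (l:ℝ) + 4) * jb w ^ (l + 1) * jb z ^ (l + 1)
              ≤ (3 * (l:ℝ) + 4) * 3 ^ (l + 1) * jb w ^ (l + 1) := by
            have := mul_le_mul_of_nonneg_left hjzp
              (show (0:ℝ) ≤ (3 * (l:ℝ) + 4) * jb w ^ (l + 1) by positivity)
            nlinarith [this]
          nlinarith [mul_le_mul_of_nonneg_right hbig hd.le]
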